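/- For every t ≥ 1 there exists a constant K > 0 (depending only on t) such that: for all σ > 0 and τ > 0 with σ^t ≤ τ, if X ~ N(0, σ²), then E[|X|^t · 1{|X|^t > τ}] ≤ K τ · P(|X|^t > τ); equivalently, the conditional expectation E[|X|^t | |X|^t > τ] is at most K τ. -/

import Mathlib

/-!
Put `a = τ ^ (1 / t)`, so that the event is `a < |X|` and `σ ≤ a`; by symmetry it suffices to
compare `∫_a^∞ u^t g` with `a^t ∫_a^∞ g` for the weight `g u = exp (-u² / (2σ²))`.
For `u ≥ a ≥ σ` the polynomial factor `(u / a)^t` is absorbed by half of the Gaussian decay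
beyond `a`: `u^t g u ≤ (1 + 2t)^t a^t exp (-a u / (2σ²))`, and integrating gives
`∫_a^∞ u^t g ≤ (1 + 2t)^t a^t (2σ² / a) g a`. Conversely `g ≥ e^(-3/2) g a` on the interval
`(a, a + σ² / a]`, so `∫_a^∞ g ≥ e^(-3/2) (σ² / a) g a`. Hence `K = 2 e^(3/2) (1 + 2t)^t` works.
-/

open MeasureTheory ProbabilityTheory Set Real

lemma one_add_rpow_le_mul_exp_half {t : ℝ} (ht : 0 < t) {w : ℝ} (hw : 0 ≤ w) :
    (1 + w) ^ t ≤ (1 + 2 * t) ^ t * exp (w / 2) := by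
  have hlin : 1 + w ≤ (1 + 2 * t) * exp (w / (2 * t)) := by
    calc 1 + w ≤ (1 + 2 * t) * (1 + w / (2 * t)) := by
          have : 0 ≤ w / (2 * t) := by positivity
          rw [add_mul, one_mul, mul_one_add, mul_div_cancel₀ _ (by positivity)]
          linarith
      _ ≤ (1 + 2 * t) * exp (w / (2 * t)) := by
          gcongr
          linarith [add_one_le_exp (w / (2 * t))]
  calc (1 + w) ^ t ≤ ((1 + 2 * t) * exp (w / (2 * t))) ^ t := by gcongr
    _ = (1 + 2 * t) ^ t * exp (w / 2) := by
      rw [mul_rpow (by positivity) (exp_pos _).le, ← exp_mul]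
      field_simp

lemma rpow_mul_exp_neg_sq_le {t σ a u : ℝ} (ht : 0 < t) (hσ : 0 < σ) (hσa : σ ≤ a)
    (hau : a ≤ u) :
    u ^ t * exp (-u ^ 2 / (2 * σ ^ 2))
      ≤ (1 + 2 * t) ^ t * a ^ t * exp (-(a / (2 * σ ^ 2)) * u) := by
  have ha : 0 < a := hσ.trans_le hσa
  set w := a * (u - a) / σ ^ 2 with hw
  have hw0 : 0 ≤ w := by have := sub_nonneg.2 hau; positivity
  have hpow : u ^ t ≤ a ^ t * ((1 + 2 * t) ^ t * exp (w / 2)) := by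
    have hu : u ≤ a * (1 + w) := by
      have : (u - a) / a ≤ w := by
        rw [hw, div_le_div_iff₀ ha (by positivity)]
        have := sub_nonneg.2 hau
        have : σ ^ 2 ≤ a ^ 2 := by gcongr
        nlinarith
      rw [div_le_iff₀ ha] at this
      nlinarith
    calc u ^ t ≤ (a * (1 + w)) ^ t := by gcongr; linarith
      _ = a ^ t * (1 + w) ^ t := mul_rpow ha.le (by linarith)
      _ ≤ a ^ t * ((1 + 2 * t) ^ t * exp (w / 2)) := by
        gcongr; exact one_add_rpow_le_mul_exp_half ht hw0
  have hexp : exp (w / 2) * exp (-u ^ 2 / (2 * σ ^ 2)) ≤ exp (-(a / (2 * σ ^ 2)) * u) := by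
    rw [← exp_add]
    gcongr
    rw [hw]
    field_simp
    nlinarith
  calc u ^ t * exp (-u ^ 2 / (2 * σ ^ 2))
      ≤ a ^ t * ((1 + 2 * t) ^ t * exp (w / 2)) * exp (-u ^ 2 / (2 * σ ^ 2)) := by gcongr
    _ = (1 + 2 * t) ^ t * a ^ t * (exp (w / 2) * exp (-u ^ 2 / (2 * σ ^ 2))) := by ring
    _ ≤ (1 + 2 * t) ^ t * a ^ t * exp (-(a / (2 * σ ^ 2)) * u) := by gcongr

lemma integrable_rpow_mul_exp_neg_sq_div {s : ℝ} (hs : -1 < s) {σ : ℝ} (hσ : 0 < σ) :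
    Integrable fun x : ℝ ↦ x ^ s * exp (-x ^ 2 / (2 * σ ^ 2)) := by
  convert integrable_rpow_mul_exp_neg_mul_sq (b := (2 * σ ^ 2)⁻¹) (by positivity) hs using 4
  ring

lemma integrable_exp_neg_sq_div {σ : ℝ} (hσ : 0 < σ) :
    Integrable fun x : ℝ ↦ exp (-x ^ 2 / (2 * σ ^ 2)) := by
  convert integrable_exp_neg_mul_sq (b := (2 * σ ^ 2)⁻¹) (by positivity) using 3
  ring

lemma integral_Ioi_rpow_mul_exp_neg_sq_le {t σ a : ℝ} (ht : 0 < t) (hσ : 0 < σ) (hσa : σ ≤ a) :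
    ∫ u in Ioi a, u ^ t * exp (-u ^ 2 / (2 * σ ^ 2))
      ≤ (1 + 2 * t) ^ t * a ^ t * (2 * σ ^ 2 / a * exp (-a ^ 2 / (2 * σ ^ 2))) := by
  have ha : 0 < a := hσ.trans_le hσa
  have hc : -(a / (2 * σ ^ 2)) < 0 := by
    rw [neg_lt_zero]; positivity
  calc ∫ u in Ioi a, u ^ t * exp (-u ^ 2 / (2 * σ ^ 2))
      ≤ ∫ u in Ioi a, (1 + 2 * t) ^ t * a ^ t * exp (-(a / (2 * σ ^ 2)) * u) :=
        setIntegral_mono_on (integrable_rpow_mul_exp_neg_sq_div (by linarith) hσ).integrableOn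
          ((integrableOn_exp_mul_Ioi hc a).const_mul _) measurableSet_Ioi
          fun u hu ↦ rpow_mul_exp_neg_sq_le ht hσ hσa (le_of_lt hu)
    _ = (1 + 2 * t) ^ t * a ^ t * (2 * σ ^ 2 / a * exp (-a ^ 2 / (2 * σ ^ 2))) := by
        rw [integral_const_mul, integral_exp_mul_Ioi hc]
        congr 1
        field_simp

lemma exp_neg_sq_le_integral_Ioi {σ a : ℝ} (hσ : 0 < σ) (hσa : σ ≤ a) :
    σ ^ 2 / a * exp (-a ^ 2 / (2 * σ ^ 2))
      ≤ exp (3 / 2) * ∫ u in Ioi a, exp (-u ^ 2 / (2 * σ ^ 2)) := by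
  have ha : 0 < a := hσ.trans_le hσa
  have hint := (integrable_exp_neg_sq_div hσ).integrableOn (s := Ioi a)
  have hnear : ∀ u ∈ Ioc a (a + σ ^ 2 / a),
      exp (-a ^ 2 / (2 * σ ^ 2) - 3 / 2) ≤ exp (-u ^ 2 / (2 * σ ^ 2)) := by
    rintro u ⟨hau, hu⟩
    gcongr
    have : u ^ 2 ≤ a ^ 2 + 3 * σ ^ 2 := by
      have h1 : σ ^ 2 / a ≤ a := by rw [div_le_iff₀ ha]; nlinarith
      have h2 : 0 ≤ σ ^ 2 / a := by positivity
      calc u ^ 2 ≤ (a + σ ^ 2 / a) ^ 2 := by gcongr; linarith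
        _ = a ^ 2 + 2 * σ ^ 2 + σ ^ 2 / a * (σ ^ 2 / a) := by field_simp; ring
        _ ≤ a ^ 2 + 3 * σ ^ 2 := by
          have : σ ^ 2 / a * (σ ^ 2 / a) ≤ σ ^ 2 / a * a := by gcongr
          rw [div_mul_cancel₀ _ ha.ne'] at this
          linarith
    rw [show -a ^ 2 / (2 * σ ^ 2) - 3 / 2 = -(a ^ 2 + 3 * σ ^ 2) / (2 * σ ^ 2) by
      field_simp; ring]
    gcongr
  calc σ ^ 2 / a * exp (-a ^ 2 / (2 * σ ^ 2))
      = exp (3 / 2)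
          * (exp (-a ^ 2 / (2 * σ ^ 2) - 3 / 2) * volume.real (Ioc a (a + σ ^ 2 / a))) := by
        rw [volume_real_Ioc_of_le (le_add_of_nonneg_right (by positivity)), exp_sub]
        field_simp
        ring
    _ ≤ exp (3 / 2) * ∫ u in Ioc a (a + σ ^ 2 / a), exp (-u ^ 2 / (2 * σ ^ 2)) := by
        gcongr
        exact setIntegral_ge_of_const_le_real measurableSet_Ioc measure_Ioc_lt_top.ne hnear
          (hint.mono_set Ioc_subset_Ioi_self)
    _ ≤ exp (3 / 2) * ∫ u in Ioi a, exp (-u ^ 2 / (2 * σ ^ 2)) :=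
        mul_le_mul_of_nonneg_left (setIntegral_mono_set hint
          (.of_forall fun _ ↦ (exp_pos _).le) Ioc_subset_Ioi_self.eventuallyLE) (exp_pos _).le

lemma integral_Ioi_rpow_mul_exp_neg_sq_le_mul_integral {t σ a : ℝ} (ht : 0 < t) (hσ : 0 < σ)
    (hσa : σ ≤ a) :
    ∫ u in Ioi a, u ^ t * exp (-u ^ 2 / (2 * σ ^ 2))
      ≤ 2 * exp (3 / 2) * (1 + 2 * t) ^ t * a ^ t * ∫ u in Ioi a, exp (-u ^ 2 / (2 * σ ^ 2)) :=
  calc ∫ u in Ioi a, u ^ t * exp (-u ^ 2 / (2 * σ ^ 2))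
      ≤ (1 + 2 * t) ^ t * a ^ t * (2 * σ ^ 2 / a * exp (-a ^ 2 / (2 * σ ^ 2))) :=
        integral_Ioi_rpow_mul_exp_neg_sq_le ht hσ hσa
    _ = 2 * (1 + 2 * t) ^ t * a ^ t * (σ ^ 2 / a * exp (-a ^ 2 / (2 * σ ^ 2))) := by ring
    _ ≤ 2 * (1 + 2 * t) ^ t * a ^ t * (exp (3 / 2) * ∫ u in Ioi a, exp (-u ^ 2 / (2 * σ ^ 2))) :=
        mul_le_mul_of_nonneg_left (exp_neg_sq_le_integral_Ioi hσ hσa)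
          (by have := hσ.trans_le hσa; positivity)
    _ = _ := by ring

lemma setIntegral_lt_abs_comp_abs {b : ℝ} (hb : 0 ≤ b) (f : ℝ → ℝ) :
    ∫ x in {x : ℝ | b < |x|}, f |x| = 2 * ∫ x in Ioi b, f x := by
  have hind : {x : ℝ | b < |x|}.indicator (fun x ↦ f |x|) = fun x ↦ (Ioi b).indicator f |x| := by
    ext x
    simp [indicator]
  rw [← integral_indicator (measurableSet_lt measurable_const continuous_abs.measurable), hind,
    integral_comp_abs, setIntegral_indicator measurableSet_Ioi, Ioi_inter_Ioi, max_eq_right hb]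

lemma setIntegral_gaussianReal_eq_setIntegral_smul {E : Type*} [NormedAddCommGroup E]
    [NormedSpace ℝ E] {μ : ℝ} {v : NNReal} (hv : v ≠ 0) {s : Set ℝ} (hs : MeasurableSet s)
    (f : ℝ → E) :
    ∫ x in s, f x ∂gaussianReal μ v = ∫ x in s, gaussianPDFReal μ v x • f x := by
  rw [← integral_indicator hs, integral_gaussianReal_eq_integral_smul hv, ← integral_indicator hs]
  congr 1
  ext x
  by_cases hx : x ∈ s <;> simp [hx]

lemma setIntegral_abs_rpow_gaussianReal_le {t σ a : ℝ} (ht : 0 < t) (hσ : 0 < σ) (hσa : σ ≤ a) :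
    ∫ x in {x : ℝ | a < |x|}, |x| ^ t ∂gaussianReal 0 (σ ^ 2).toNNReal
      ≤ 2 * exp (3 / 2) * (1 + 2 * t) ^ t * a ^ t
        * (gaussianReal 0 (σ ^ 2).toNNReal {x : ℝ | a < |x|}).toReal := by
  have hv : (σ ^ 2).toNNReal ≠ 0 := by simp [hσ.ne']
  have hS : MeasurableSet {x : ℝ | a < |x|} :=
    measurableSet_lt measurable_const continuous_abs.measurable
  set c := (√(2 * π * σ ^ 2))⁻¹
  have hpdf (x : ℝ) : gaussianPDFReal 0 (σ ^ 2).toNNReal x = c * exp (-|x| ^ 2 / (2 * σ ^ 2)) := by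
    rw [gaussianPDFReal, Real.coe_toNNReal _ (sq_nonneg σ), sub_zero, sq_abs]
  have hprob : (gaussianReal 0 (σ ^ 2).toNNReal {x : ℝ | a < |x|}).toReal
      = 2 * ∫ u in Ioi a, c * exp (-u ^ 2 / (2 * σ ^ 2)) := by
    rw [← measureReal_def, ← mul_one (Measure.real _ _), ← smul_eq_mul, ← setIntegral_const,
      setIntegral_gaussianReal_eq_setIntegral_smul hv hS]
    simp only [hpdf, smul_eq_mul, mul_one]
    exact setIntegral_lt_abs_comp_abs (hσ.le.trans hσa) fun u ↦ c * exp (-u ^ 2 / (2 * σ ^ 2))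
  rw [hprob, setIntegral_gaussianReal_eq_setIntegral_smul hv hS]
  simp only [hpdf, smul_eq_mul]
  rw [setIntegral_lt_abs_comp_abs (hσ.le.trans hσa)
    fun u ↦ c * exp (-u ^ 2 / (2 * σ ^ 2)) * u ^ t]
  calc 2 * ∫ u in Ioi a, c * exp (-u ^ 2 / (2 * σ ^ 2)) * u ^ t
      = 2 * c * ∫ u in Ioi a, u ^ t * exp (-u ^ 2 / (2 * σ ^ 2)) := by
        simp only [mul_assoc, mul_comm (exp _), integral_const_mul]
    _ ≤ 2 * c * (2 * exp (3 / 2) * (1 + 2 * t) ^ t * a ^ t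
          * ∫ u in Ioi a, exp (-u ^ 2 / (2 * σ ^ 2))) := by
        gcongr
        exact integral_Ioi_rpow_mul_exp_neg_sq_le_mul_integral ht hσ hσa
    _ = _ := by rw [integral_const_mul]; ring

lemma setOf_lt_abs_rpow_eq {t τ : ℝ} (ht : 0 < t) (hτ : 0 ≤ τ) :
    {x : ℝ | τ < |x| ^ t} = {x | τ ^ t⁻¹ < |x|} := by
  ext x
  exact (rpow_inv_lt_iff_of_pos hτ (abs_nonneg x) ht).symm

/-- For every `t ≥ 1` there is `K > 0` depending only on `t` such that for all
`σ, τ > 0` with `σ^t ≤ τ`, if `X ~ N(0, σ²)` then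
`E[|X|^t · 1{|X|^t > τ}] ≤ K τ · P(|X|^t > τ)`. -/
theorem conditional_moment_bound (t : ℝ) (ht : 1 ≤ t) :
    ∃ K > 0, ∀ σ τ : ℝ, 0 < σ → 0 < τ → σ ^ t ≤ τ →
      ∫ x in {x : ℝ | τ < |x| ^ t}, |x| ^ t ∂(gaussianReal 0 (σ ^ 2).toNNReal)
        ≤ K * τ * ((gaussianReal 0 (σ ^ 2).toNNReal) {x : ℝ | τ < |x| ^ t}).toReal := by
  have ht0 : 0 < t := by linarith
  refine ⟨2 * exp (3 / 2) * (1 + 2 * t) ^ t, by positivity, fun σ τ hσ hτ hστ ↦ ?_⟩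
  have hσa : σ ≤ τ ^ t⁻¹ := (le_rpow_inv_iff_of_pos hσ.le hτ.le ht0).2 hστ
  rw [setOf_lt_abs_rpow_eq ht0 hτ.le]
  convert setIntegral_abs_rpow_gaussianReal_le ht0 hσ hσa using 3
  rw [rpow_inv_rpow hτ.le ht0.ne']
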